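/- Consider the cone percolation process on T_d with geometric radius of influence, P[R = k] = (1 − p) p^k for k = 0,1,2,..., where 0 < p < 1. If d p² − 2dp + 1 < 0, then P[V] > 0. -/

import Mathlib

open MeasureTheory ProbabilityTheory Filter Set
open scoped ENNReal

noncomputable section

/-- Length of the longest common prefix of two lists. -/
def lcpLen {α : Type*} [DecidableEq α] : List α → List α → ℕ
  | a :: as, b :: bs => if a = b then lcpLen as bs + 1 else 0
  | _, _ => 0

/-- Graph distance on the rooted tree `T_d^+`, whose vertices are the finite words
over `Fin d` (every vertex has exactly `d` children); the root `O` is `[]`. -/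
def distPlus {d : ℕ} (u v : List (Fin d)) : ℕ :=
  (u.length - lcpLen u v) + (v.length - lcpLen u v)

/-- Vertices of the homogeneous tree `T_d`, in which every vertex has `d + 1`
neighbours: the origin `O` is `none`; any other vertex is coded by its first step
away from the origin (one of `d + 1` directions) followed by a word over `Fin d`
(after the first step, `d` directions lead away from the origin). -/
abbrev TdVertex (d : ℕ) : Type := Option (Fin (d + 1) × List (Fin d))

/-- Graph distance on the homogeneous tree `T_d`. -/
def distFull {d : ℕ} : TdVertex d → TdVertex d → ℕ
  | none, none => 0
  | none, some (_, l) => l.length + 1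
  | some (_, l), none => l.length + 1
  | some (a, l), some (b, m) =>
      if a = b then (l.length - lcpLen l m) + (m.length - lcpLen l m)
      else (l.length + 1) + (m.length + 1)

/-- The sets `I_n` of the cone percolation process with radii `r` on the tree with
vertex set `V`, graph distance `dist` and origin `o`:  `I_0 = {o}` and
`I_{n+1} = ⋃_{u ∈ I_n} B_u` where `B_u = {w : dist u w ≤ r u}`. -/
def reachSet {V : Type*} (dist : V → V → ℕ) (o : V) (r : V → ℕ) : ℕ → Set V
  | 0 => {o}
  | n + 1 => ⋃ u ∈ reachSet dist o r n, {w | dist u w ≤ r u}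

/-- `I = ⋃_{n ≥ 0} I_n`, the set of vertices that ever hear the rumour. -/
def cluster {V : Type*} (dist : V → V → ℕ) (o : V) (r : V → ℕ) : Set V :=
  ⋃ n, reachSet dist o r n

/-- The survival event `V = {|I| = ∞}`, for radii given by the random field `R`. -/
def survival {V : Type*} {Ω : Type*} (dist : V → V → ℕ) (o : V) (R : V → Ω → ℕ) : Set Ω :=
  {ω | (cluster dist o fun u => R u ω).Infinite}

/-! The origin reaches the first vertex of a fixed branch with probability `p`. From there follow
paths made of blocks, words of length `ℓ ≤ K`, in which every site has truncated radius
`min R K = ℓ` and so reaches exactly the end of its block. The expected number of such paths of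
`n` blocks is `p mⁿ` with `m = ∑_{ℓ < K} dˡ (1 - p) pˡ + dᴷ pᴷ`; as `K → ∞`, `m` tends to
`(1 - p) d p / (1 - d p)` if `d p < 1` and to `∞` otherwise, so `m > 1` for large `K` exactly
because `d p² - 2 d p + 1 < 0`. Two paths that first differ at block `j` either prescribe two
different radii at the same site, or use disjoint sets of sites after `j`. Hence the second moment
of the number of realised paths is `O(p m²ⁿ)`, and the Chung–Erdős inequality bounds the
probability that some path of `n` blocks is realised below, uniformly in `n`. A realised path of
`n` blocks reaches distance `> n`, so the cluster is infinite with positive probability. -/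

section Probability

variable {Ω : Type*} [MeasurableSpace Ω] {μ : Measure Ω}

theorem sq_sum_measure_le_sum_measure_inter_mul_measure_iUnion {ι : Type*} [Fintype ι]
    {E : ι → Set Ω} (hE : ∀ i, MeasurableSet (E i)) :
    (∑ i, μ (E i)) ^ 2 ≤ (∑ q : ι × ι, μ (E q.1 ∩ E q.2)) * μ (⋃ i, E i) := by
  set Z : Ω → ℝ≥0∞ := fun ω => ∑ i, (E i).indicator 1 ω
  set U := ⋃ i, E i
  have hU : MeasurableSet U := .iUnion hE
  have hZm : Measurable Z := Finset.measurable_sum _ fun i _ => measurable_one.indicator (hE i)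
  have hZU : Z * U.indicator 1 = Z := by
    funext ω
    by_cases hω : ω ∈ U
    · simp [hω]
    · have : ∀ i, ω ∉ E i := fun i hi => hω (mem_iUnion.mpr ⟨i, hi⟩)
      simp [Z, hω, this]
  have hZ : ∫⁻ ω, Z ω ∂μ = ∑ i, μ (E i) := by
    rw [lintegral_finsetSum _ fun i _ => measurable_one.indicator (hE i)]
    simp_rw [lintegral_indicator_one (hE _)]
  have hZ2 : ∫⁻ ω, Z ω ^ (2 : ℝ) ∂μ = ∑ q : ι × ι, μ (E q.1 ∩ E q.2) := by
    have h : ∀ ω, Z ω ^ (2 : ℝ) = ∑ q : ι × ι, (E q.1 ∩ E q.2).indicator 1 ω := fun ω => by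
      simp_rw [ENNReal.rpow_two, sq, Z, Finset.sum_mul_sum, ← Fintype.sum_prod_type',
        inter_indicator_one, Pi.mul_apply]
    simp_rw [h]
    rw [lintegral_finsetSum _ fun q _ => measurable_one.indicator ((hE q.1).inter (hE q.2))]
    simp_rw [lintegral_indicator_one ((hE _).inter (hE _))]
  have hU2 : ∫⁻ ω, U.indicator 1 ω ^ (2 : ℝ) ∂μ = μ U := by
    have h : ∀ ω, U.indicator (1 : Ω → ℝ≥0∞) ω ^ (2 : ℝ) = U.indicator 1 ω := fun ω => by
      by_cases hω : ω ∈ U <;> simp [hω]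
    simp_rw [h, lintegral_indicator_one hU]
  have hCS := ENNReal.lintegral_mul_le_Lp_mul_Lq μ Real.HolderConjugate.two_two
    hZm.aemeasurable (measurable_one.indicator hU).aemeasurable
  rwa [hZU, hZ, hZ2, hU2, ← ENNReal.mul_rpow_of_nonneg _ _ (by norm_num), one_div,
    ENNReal.le_rpow_inv_iff (by norm_num), ENNReal.rpow_two] at hCS

theorem MeasureTheory.le_measure_limsup_atTop [IsFiniteMeasure μ] {s : ℕ → Set Ω}
    (hs : ∀ n, MeasurableSet (s n)) {c : ℝ≥0∞} (h : ∀ n, c ≤ μ (s n)) :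
    c ≤ μ (limsup s atTop) := by
  have hanti : Antitone fun n => ⋃ i ≥ n, s i :=
    fun m n hmn => biUnion_subset_biUnion_left fun i hi => le_trans hmn hi
  simp only [limsup_eq_iInf_iSup_of_nat, iInf_eq_iInter, iSup_eq_iUnion]
  rw [hanti.measure_iInter
    (fun n => (MeasurableSet.biUnion (to_countable _) fun i _ => hs i).nullMeasurableSet)
    ⟨0, measure_ne_top μ _⟩]
  exact le_iInf fun n => (h n).trans (measure_mono (subset_biUnion_of_mem (le_refl n)))

theorem ProbabilityTheory.iIndepFun.measure_iInter_preimage_comp_eq_prod {ι V β : Type*}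
    [Fintype ι] [MeasurableSpace β] {X : V → Ω → β} (hX : iIndepFun X μ) {g : ι → V}
    (hg : Function.Injective g) {s : ι → Set β} (hs : ∀ i, MeasurableSet (s i)) :
    μ (⋂ i, X (g i) ⁻¹' s i) = ∏ i, μ (X (g i) ⁻¹' s i) := by
  simpa using (hX.precomp hg).measure_inter_preimage_eq_mul Finset.univ fun i _ => hs i

variable {X : Ω → ℕ} {p : ℝ}

theorem measure_le_eq_ofReal_pow (hX : Measurable X) (hp0 : 0 ≤ p) (hp1 : p < 1)
    (hlaw : ∀ k, μ {ω | X ω = k} = ENNReal.ofReal ((1 - p) * p ^ k)) (k : ℕ) :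
    μ {ω | k ≤ X ω} = ENNReal.ofReal (p ^ k) := by
  have hset : {ω | k ≤ X ω} = ⋃ i : ℕ, {ω | X ω = k + i} := by
    ext ω
    simp only [mem_ofPred_eq, mem_iUnion]
    exact ⟨fun h => ⟨X ω - k, by omega⟩, fun ⟨i, hi⟩ => by omega⟩
  have hdisj : Pairwise (Function.onFun Disjoint fun i : ℕ => {ω | X ω = k + i}) :=
    fun i j hij => Set.disjoint_left.mpr fun ω (hi : X ω = k + i) (hj : X ω = k + j) =>
      hij (by omega)
  have hsum : HasSum (fun i : ℕ => (1 - p) * p ^ (k + i)) (p ^ k) := by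
    simp_rw [pow_add, ← mul_assoc]
    have h := (hasSum_geometric_of_lt_one hp0 hp1).mul_left ((1 - p) * p ^ k)
    rwa [mul_right_comm, mul_inv_cancel₀ (sub_pos.mpr hp1).ne', one_mul] at h
  rw [hset, measure_iUnion hdisj fun i => hX (measurableSet_singleton _)]
  simp_rw [hlaw]
  rw [← ENNReal.ofReal_tsum_of_nonneg (fun i => by have := sub_pos.mpr hp1; positivity)
    hsum.summable, hsum.tsum_eq]

def truncGeomWeight (p : ℝ) (K ℓ : ℕ) : ℝ := if ℓ < K then (1 - p) * p ^ ℓ else p ^ ℓ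

theorem measure_min_eq_ofReal_truncGeomWeight (hX : Measurable X) (hp0 : 0 ≤ p) (hp1 : p < 1)
    (hlaw : ∀ k, μ {ω | X ω = k} = ENNReal.ofReal ((1 - p) * p ^ k)) {K ℓ : ℕ} (hℓ : ℓ ≤ K) :
    μ {ω | min (X ω) K = ℓ} = ENNReal.ofReal (truncGeomWeight p K ℓ) := by
  rw [truncGeomWeight]
  split_ifs with h
  · rw [← hlaw]; congr 1; ext ω; simp only [mem_ofPred_eq]; omega
  · rw [← measure_le_eq_ofReal_pow hX hp0 hp1 hlaw]
    congr 1; ext ω; simp only [mem_ofPred_eq]; omega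

end Probability

theorem exists_one_lt_sum_range_mul_pow {a x : ℝ} (ha : 0 < a) (hx : 0 ≤ x)
    (h : 1 - x < a * x) : ∃ N, 1 < ∑ i ∈ Finset.range N, a * x ^ (i + 1) := by
  by_contra! hle
  have hnn : ∀ i, 0 ≤ a * x ^ (i + 1) := fun i => by positivity
  have hx0 : x ≠ 0 := by rintro rfl; norm_num at h
  have hterm : (fun i : ℕ => a * x ^ (i + 1)) = fun i => a * x * x ^ i := by
    funext i; ring
  have hgeom : Summable fun i : ℕ => x ^ i := by
    have := summable_of_sum_range_le hnn hle
    rwa [hterm, summable_mul_left_iff (mul_ne_zero ha.ne' hx0)] at this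
  have hx1 : x < 1 := by
    simpa [abs_of_nonneg hx] using summable_geometric_iff_norm_lt_one.mp hgeom
  have htsum := Real.tsum_le_of_sum_range_le hnn hle
  rw [hterm, tsum_mul_left, tsum_geometric_of_lt_one hx hx1, ← div_eq_mul_inv,
    div_le_one (sub_pos.mpr hx1)] at htsum
  linarith

section Branching

open Finset

theorem ENNReal.geom_sum_le_pow_div {m : ℝ≥0∞} (hm : 1 ≤ m) (hm' : m ≠ ∞) (n : ℕ) :
    ∑ k ∈ range n, m ^ k ≤ m ^ n / (m - 1) := by
  rcases hm.eq_or_lt with rfl | hm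
  · simp
  rw [ENNReal.le_div_iff_mul_le (.inl (tsub_pos_of_lt hm).ne') (.inl (by simpa using hm'))]
  calc (∑ k ∈ range n, m ^ k) * (m - 1)
      ≤ (∑ k ∈ range n, (m - 1 + 1) ^ k) * (m - 1) + 1 := by
        rw [tsub_add_cancel_of_le hm.le]; exact le_self_add
    _ = m ^ n := by rw [geom_sum_mul_add, tsub_add_cancel_of_le hm.le]

variable {B : Type*} [Fintype B] {n : ℕ}

theorem sum_ite_eqOn_Iio_prod_Ioi [DecidableEq B] (q : B → ℝ≥0∞) (w : Fin n → B) (j : Fin n) :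
    ∑ w' : Fin n → B, (if ∀ i < j, w' i = w i then ∏ i ∈ Ioi j, q (w' i) else 0)
      = Fintype.card B * (∑ b, q b) ^ (n - 1 - j) := by
  set G : Fin n → B → ℝ≥0∞ := fun i b =>
    if j < i then q b else if i = j then 1 else if b = w i then 1 else 0
  have hG : ∀ w' : Fin n → B,
      (if ∀ i < j, w' i = w i then ∏ i ∈ Ioi j, q (w' i) else 0) = ∏ i, G i (w' i) := by
    intro w'
    split_ifs with hw'
    · rw [← filter_lt_eq_Ioi, prod_filter]
      refine prod_congr rfl fun i _ => ?_
      rcases lt_trichotomy i j with h | rfl | h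
      · simp [G, h.not_gt, h.ne, hw' i h]
      · simp [G]
      · simp [G, h]
    · push Not at hw'
      obtain ⟨i, hij, hi⟩ := hw'
      exact (prod_eq_zero (mem_univ i) (by simp [G, hij.not_gt, hij.ne, hi])).symm
  have hsumG : ∀ i, ∑ b, G i b =
      (if i = j then (Fintype.card B : ℝ≥0∞) else 1) * if j < i then ∑ b, q b else 1 := by
    intro i
    rcases lt_trichotomy i j with h | rfl | h
    · simp [G, h.not_gt, h.ne]
    · simp [G]
    · simp [G, h, h.ne']
  simp_rw [hG, ← Fintype.prod_sum, hsumG, prod_mul_distrib, prod_ite_eq',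
    if_pos (Finset.mem_univ j), ← prod_filter, filter_lt_eq_Ioi, prod_const, Fin.card_Ioi]

variable {Ω : Type*} [MeasurableSpace Ω] (μ : Measure Ω)

theorem sum_measure_inter_le_of_branching (E : (Fin n → B) → Set Ω) (q : B → ℝ≥0∞)
    (hpair : ∀ (w w' : Fin n → B) (j : Fin n), (∀ i < j, w i = w' i) → w j ≠ w' j →
      μ (E w ∩ E w') ≤ μ (E w) * ∏ i ∈ Ioi j, q (w' i)) :
    ∑ x : (Fin n → B) × (Fin n → B), μ (E x.1 ∩ E x.2)
      ≤ (∑ w, μ (E w)) * (1 + Fintype.card B * ∑ k ∈ range n, (∑ b, q b) ^ k) := by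
  let _ : DecidableEq B := Classical.decEq B
  set T : (Fin n → B) → Fin n → (Fin n → B) → ℝ≥0∞ := fun w j w' =>
    if ∀ i < j, w' i = w i then ∏ i ∈ Ioi j, q (w' i) else 0
  have hle : ∀ w w', μ (E w ∩ E w') ≤
      (if w' = w then μ (E w) else 0) + μ (E w) * ∑ j, T w j w' := by
    intro w w'
    by_cases hw : w' = w
    · simp [hw]
    obtain ⟨j, hj, hmin⟩ := wellFounded_lt.has_min {i | w i ≠ w' i}
      (Function.ne_iff.mp (Ne.symm hw))
    have hagree : ∀ i < j, w i = w' i := fun i hi => not_not.mp fun h => hmin i h hi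
    have hT : T w j w' = ∏ i ∈ Ioi j, q (w' i) := if_pos fun i hi => (hagree i hi).symm
    calc μ (E w ∩ E w') ≤ μ (E w) * T w j w' := hT ▸ hpair w w' j hagree hj
      _ ≤ μ (E w) * ∑ j, T w j w' := by
          gcongr; exact single_le_sum (f := fun j => T w j w') (fun _ _ => zero_le) (mem_univ j)
      _ ≤ _ := le_add_self
  have hreflect : ∑ j : Fin n, (∑ b, q b) ^ (n - 1 - j) = ∑ k ∈ range n, (∑ b, q b) ^ k := by
    rw [Fin.sum_univ_eq_sum_range (fun j => (∑ b, q b) ^ (n - 1 - j)), sum_range_reflect]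
  rw [Fintype.sum_prod_type, sum_mul]
  refine sum_le_sum fun w _ => (sum_le_sum fun w' _ => hle w w').trans_eq ?_
  simp_rw [sum_add_distrib, sum_ite_eq', if_pos (Finset.mem_univ w), ← mul_sum]
  rw [sum_comm]
  simp_rw [T, sum_ite_eqOn_Iio_prod_Ioi, ← mul_sum, hreflect, mul_add, mul_one]

theorem le_mul_measure_iUnion_of_branching [IsFiniteMeasure μ] (E : (Fin n → B) → Set Ω)
    (hE : ∀ w, MeasurableSet (E w)) (c : ℝ≥0∞) (q : B → ℝ≥0∞)
    (hprob : ∀ w, μ (E w) = c * ∏ i, q (w i))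
    (hpair : ∀ (w w' : Fin n → B) (j : Fin n), (∀ i < j, w i = w' i) → w j ≠ w' j →
      μ (E w ∩ E w') ≤ μ (E w) * ∏ i ∈ Ioi j, q (w' i))
    (hm : 1 < ∑ b, q b) (hm' : ∑ b, q b ≠ ∞) :
    c ≤ (1 + Fintype.card B / (∑ b, q b - 1)) * μ (⋃ w, E w) := by
  set m := ∑ b, q b
  have hfirst : ∑ w, μ (E w) = c * m ^ n := by simp_rw [hprob, ← mul_sum, m, Fintype.sum_pow]
  have hfirst_ne_top : ∑ w, μ (E w) ≠ ∞ := ENNReal.sum_ne_top.mpr fun w _ => measure_ne_top μ _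
  have hmn : m ^ n ≠ 0 := pow_ne_zero _ (zero_lt_one.trans hm).ne'
  have hmn' : m ^ n ≠ ∞ := ENNReal.pow_ne_top hm'
  have hsecond : c * m ^ n ≤ (1 + Fintype.card B * ∑ k ∈ range n, m ^ k) * μ (⋃ w, E w) := by
    have h := (sq_sum_measure_le_sum_measure_inter_mul_measure_iUnion hE).trans
      (mul_le_mul_of_nonneg_right (sum_measure_inter_le_of_branching μ E q hpair) zero_le)
    rw [sq, mul_assoc] at h
    rw [← hfirst]
    rcases eq_or_ne (∑ w, μ (E w)) 0 with h0 | h0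
    · rw [h0]; exact zero_le
    · exact (ENNReal.mul_le_mul_iff_right h0 hfirst_ne_top).mp h
  refine (ENNReal.mul_le_mul_iff_right hmn hmn').mp ?_
  calc m ^ n * c ≤ (1 + Fintype.card B * ∑ k ∈ range n, m ^ k) * μ (⋃ w, E w) := by
        rwa [mul_comm]
    _ ≤ (m ^ n + Fintype.card B * (m ^ n / (m - 1))) * μ (⋃ w, E w) := by
        gcongr
        · exact one_le_pow₀ hm.le
        · exact ENNReal.geom_sum_le_pow_div hm.le hm' n
    _ = m ^ n * ((1 + Fintype.card B / (m - 1)) * μ (⋃ w, E w)) := by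
        simp only [div_eq_mul_inv]; ring

end Branching

theorem lcpLen_append_right {α : Type*} [DecidableEq α] (x y : List α) :
    lcpLen x (x ++ y) = x.length := by
  induction x with
  | nil => simp [lcpLen]
  | cons a x ih => simp [lcpLen, ih]

namespace ConePercolation

variable {d K n : ℕ}

abbrev Block (d K : ℕ) : Type := (k : Fin K) × (Fin (k + 1) → Fin d)

def Block.len (b : Block d K) : ℕ := b.1 + 1

def Block.word (b : Block d K) : List (Fin d) := List.ofFn b.2

@[simp] theorem Block.length_word (b : Block d K) : b.word.length = b.len := by
  simp [word, len]

theorem Block.word_injective : Function.Injective (Block.word (d := d) (K := K)) := by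
  rintro ⟨k, f⟩ ⟨k', f'⟩ h
  obtain rfl : k = k' := Fin.ext (by simpa [word] using congrArg List.length h)
  simp only [word] at h
  rw [List.ofFn_injective h]

def pathWord (w : Fin n → Block d K) : ℕ → List (Fin d)
  | 0 => []
  | i + 1 => if h : i < n then pathWord w i ++ (w ⟨i, h⟩).word else pathWord w i

section PathWord

variable (w : Fin n → Block d K)

theorem pathWord_succ {i : ℕ} (h : i < n) :
    pathWord w (i + 1) = pathWord w i ++ (w ⟨i, h⟩).word :=
  dif_pos h

theorem pathWord_prefix {i j : ℕ} (hij : i ≤ j) : pathWord w i <+: pathWord w j := by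
  induction j, hij using Nat.le_induction with
  | base => exact List.prefix_rfl
  | succ j _ ih =>
    by_cases hj : j < n
    · exact ih.trans (pathWord_succ w hj ▸ List.prefix_append _ _)
    · simpa [pathWord, hj] using ih

theorem length_pathWord_add_le {i j : ℕ} (hij : i ≤ j) (hj : j ≤ n) :
    (pathWord w i).length + (j - i) ≤ (pathWord w j).length := by
  induction j, hij using Nat.le_induction with
  | base => simp
  | succ j hij ih =>
    have := ih (by omega)
    rw [pathWord_succ w (by omega), List.length_append, Block.length_word, Block.len]
    omega

theorem pathWord_injOn {i j : ℕ} (hi : i ≤ n) (hj : j ≤ n)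
    (h : pathWord w i = pathWord w j) : i = j := by
  have hlen := congrArg List.length h
  rcases Nat.lt_trichotomy i j with hij | hij | hij
  · have := length_pathWord_add_le w hij.le hj; omega
  · exact hij
  · have := length_pathWord_add_le w hij.le hi; omega

end PathWord

theorem pathWord_congr {w w' : Fin n → Block d K} {j : ℕ}
    (h : ∀ i : Fin n, i < j → w i = w' i) {i : ℕ} (hij : i ≤ j) :
    pathWord w i = pathWord w' i := by
  induction i with
  | zero => rfl
  | succ i ih =>
    by_cases hi : i < n
    · rw [pathWord_succ w hi, pathWord_succ w' hi, ih (by omega), h ⟨i, hi⟩ hij]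
    · simpa [pathWord, hi] using ih (by omega)

theorem pathWord_ne_of_branch {w w' : Fin n → Block d K} {j : Fin n}
    (hagree : ∀ i < j, w i = w' i) (hne : w j ≠ w' j) (hlen : (w j).len = (w' j).len)
    (i : ℕ) {t : Fin n} (ht : j < t) : pathWord w i ≠ pathWord w' t := by
  have hj : pathWord w j = pathWord w' j := pathWord_congr (fun i hi => hagree i hi) le_rfl
  intro heq
  rcases Nat.lt_or_ge (j : ℕ) i with hji | hij
  · have h1 := pathWord_prefix w (Nat.succ_le_of_lt hji)
    have h2 := pathWord_prefix w' (Nat.succ_le_of_lt ht)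
    rw [pathWord_succ w j.2, heq, hj] at h1
    rw [pathWord_succ w' j.2] at h2
    have hlen' : (pathWord w' j ++ (w j).word).length
        = (pathWord w' j ++ (w' j).word).length := by
      simp [hlen]
    exact hne (Block.word_injective (List.append_cancel_left
      ((List.prefix_of_prefix_length_le h1 h2 hlen'.le).eq_of_length hlen')))
  · have h1 := (pathWord_prefix w hij).length_le
    have h2 := length_pathWord_add_le w' ht.le t.2.le
    rw [heq, hj] at h1
    have : (j : ℕ) < t := ht
    omega

def coneVertex (x : List (Fin d)) : TdVertex d := some (0, x)

theorem coneVertex_injective : Function.Injective (coneVertex (d := d)) := fun _ _ h => by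
  simpa [coneVertex] using h

theorem distFull_coneVertex_append (x y : List (Fin d)) :
    distFull (coneVertex x) (coneVertex (x ++ y)) = y.length := by
  simp [coneVertex, distFull, lcpLen_append_right]

theorem distFull_none_coneVertex (x : List (Fin d)) :
    distFull none (coneVertex x) = x.length + 1 := rfl

def site (w : Fin n → Block d K) : Option (Fin n) → TdVertex d
  | none => none
  | some i => coneVertex (pathWord w i)

/-- `min r K = ℓ` asks for radius exactly `ℓ` on a block of length `ℓ < K`, and for any radius
`≥ K` on a block of length `K`. -/
def radii (w : Fin n → Block d K) : Option (Fin n) → Set ℕ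
  | none => Ici 1
  | some i => {r | min r K = (w i).len}

def pathEvent {Ω : Type*} (R : TdVertex d → Ω → ℕ) (w : Fin n → Block d K) : Set Ω :=
  ⋂ o, R (site w o) ⁻¹' radii w o

theorem site_injective (w : Fin n → Block d K) : Function.Injective (site w) := by
  rintro (_ | i) (_ | i') h
  · rfl
  · exact absurd h (by simp [site, coneVertex])
  · exact absurd h (by simp [site, coneVertex])
  · exact congrArg some (Fin.ext (pathWord_injOn w i.2.le i'.2.le (coneVertex_injective h)))

variable {Ω : Type*} {R : TdVertex d → Ω → ℕ}

theorem pathEvent_subset_reachSet (w : Fin n → Block d K) {ω : Ω} (hω : ω ∈ pathEvent R w) :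
    ∀ i ≤ n, coneVertex (pathWord w i) ∈ reachSet distFull none (fun u => R u ω) (i + 1) := by
  intro i
  induction i with
  | zero => exact fun _ => mem_biUnion rfl (mem_iInter.mp hω none)
  | succ i ih =>
    intro hi
    have hradius : min (R (site w (some ⟨i, hi⟩)) ω) K = (w ⟨i, hi⟩).len :=
      mem_iInter.mp hω (some ⟨i, hi⟩)
    refine mem_biUnion (ih (by omega)) ?_
    show distFull _ _ ≤ _
    rw [pathWord_succ w hi, distFull_coneVertex_append, Block.length_word]
    exact hradius ▸ min_le_left _ _

theorem limsup_iUnion_pathEvent_subset_survival :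
    limsup (fun n => ⋃ w : Fin n → Block d K, pathEvent R w) atTop ⊆
      survival distFull (none : TdVertex d) R := by
  intro ω hω hfin
  obtain ⟨N, hN⟩ := (hfin.image (distFull none)).bddAbove
  obtain ⟨n, hn, hω⟩ := frequently_atTop.mp (mem_limsup_iff_frequently_mem.mp hω) N
  obtain ⟨w, hw⟩ := mem_iUnion.mp hω
  have hmem : coneVertex (pathWord w n) ∈ cluster distFull none fun u => R u ω :=
    mem_iUnion.mpr ⟨n + 1, pathEvent_subset_reachSet w hw n le_rfl⟩
  have hdist := hN (mem_image_of_mem _ hmem)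
  have hlen := length_pathWord_add_le w (Nat.zero_le n) le_rfl
  rw [distFull_none_coneVertex] at hdist
  simp only [pathWord, List.length_nil, zero_add, tsub_zero] at hlen
  omega

def blockWeight (p : ℝ) (b : Block d K) : ℝ≥0∞ := ENNReal.ofReal (truncGeomWeight p K b.len)

theorem ofReal_sum_le_sum_blockWeight {p : ℝ} (hp0 : 0 ≤ p) (hp1 : p < 1) (N : ℕ) :
    ENNReal.ofReal (∑ i ∈ Finset.range N, (1 - p) * (d * p) ^ (i + 1))
      ≤ ∑ b : Block d (N + 1), blockWeight p b := by
  have h1p := sub_pos.mpr hp1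
  have hterm : ∀ i : Fin N, ENNReal.ofReal ((1 - p) * (d * p) ^ (i.1 + 1))
      = ∑ f : Fin (i + 1) → Fin d, blockWeight p (⟨i.castSucc, f⟩ : Block d (N + 1)) := by
    intro i
    have hshort : ∀ f, blockWeight p (⟨i.castSucc, f⟩ : Block d (N + 1))
        = ENNReal.ofReal ((1 - p) * p ^ (i.1 + 1)) := fun f =>
      congrArg ENNReal.ofReal (if_pos (Nat.succ_lt_succ i.2))
    simp only [hshort, Finset.sum_const, Finset.card_univ, Fintype.card_fun, Fintype.card_fin,
      nsmul_eq_mul]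
    rw [← ENNReal.ofReal_natCast, ← ENNReal.ofReal_mul (by positivity)]
    congr 1; push_cast; ring
  rw [ENNReal.ofReal_sum_of_nonneg fun i _ => by positivity,
    ← Fin.sum_univ_eq_sum_range (fun i => ENNReal.ofReal ((1 - p) * (d * p) ^ (i + 1))),
    Fintype.sum_congr _ _ hterm, Fintype.sum_sigma, Fin.sum_univ_castSucc]
  exact le_self_add

variable [MeasurableSpace Ω] {P : Measure Ω} {p : ℝ}

theorem measurableSet_pathEvent (hRMeas : ∀ u, Measurable (R u)) (w : Fin n → Block d K) :
    MeasurableSet (pathEvent R w) :=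
  .iInter fun _ => hRMeas _ .of_discrete

theorem measure_preimage_radii_some (hRMeas : ∀ u, Measurable (R u))
    (hRDist : ∀ u k, P {ω | R u ω = k} = ENNReal.ofReal ((1 - p) * p ^ k))
    (hp0 : 0 ≤ p) (hp1 : p < 1) (w : Fin n → Block d K) (i : Fin n) :
    P (R (site w (some i)) ⁻¹' radii w (some i)) = blockWeight p (w i) :=
  measure_min_eq_ofReal_truncGeomWeight (hRMeas _) hp0 hp1 (hRDist _) (w i).1.2

theorem measure_pathEvent (hRIndep : iIndepFun R P) (hRMeas : ∀ u, Measurable (R u))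
    (hRDist : ∀ u k, P {ω | R u ω = k} = ENNReal.ofReal ((1 - p) * p ^ k))
    (hp0 : 0 ≤ p) (hp1 : p < 1) (w : Fin n → Block d K) :
    P (pathEvent R w) = ENNReal.ofReal p * ∏ i, blockWeight p (w i) := by
  rw [pathEvent, hRIndep.measure_iInter_preimage_comp_eq_prod (site_injective w)
    (fun _ => .of_discrete), Fintype.prod_option]
  congr 1
  · exact (measure_le_eq_ofReal_pow (hRMeas none) hp0 hp1 (hRDist none) 1).trans
      (by rw [pow_one])
  · exact Finset.prod_congr rfl fun i _ => measure_preimage_radii_some hRMeas hRDist hp0 hp1 w i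

theorem measure_pathEvent_inter_le (hRIndep : iIndepFun R P) (hRMeas : ∀ u, Measurable (R u))
    (hRDist : ∀ u k, P {ω | R u ω = k} = ENNReal.ofReal ((1 - p) * p ^ k))
    (hp0 : 0 ≤ p) (hp1 : p < 1) {w w' : Fin n → Block d K} {j : Fin n}
    (hagree : ∀ i < j, w i = w' i) (hne : w j ≠ w' j) :
    P (pathEvent R w ∩ pathEvent R w')
      ≤ P (pathEvent R w) * ∏ i ∈ Finset.Ioi j, blockWeight p (w' i) := by
  by_cases hlen : (w j).len = (w' j).len
  · set g : Option (Fin n) ⊕ Finset.Ioi j → TdVertex d :=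
      Sum.elim (site w) fun t => site w' (some t)
    set s : Option (Fin n) ⊕ Finset.Ioi j → Set ℕ := Sum.elim (radii w) fun t => radii w' (some t)
    have hg : Function.Injective g := by
      refine (site_injective w).sumElim
        ((site_injective w').comp ((Option.some_injective _).comp Subtype.val_injective)) ?_
      rintro (_ | i) t h
      · exact absurd h (by simp [site, coneVertex])
      · exact pathWord_ne_of_branch hagree hne hlen i (Finset.mem_Ioi.mp t.2)
          (coneVertex_injective h)
    have hsub : pathEvent R w ∩ pathEvent R w' ⊆ ⋂ x, R (g x) ⁻¹' s x := by
      rw [iInter_sum]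
      exact inter_subset_inter_right _ (subset_iInter fun t => iInter_subset _ (some t.1))
    calc P (pathEvent R w ∩ pathEvent R w') ≤ P (⋂ x, R (g x) ⁻¹' s x) := measure_mono hsub
      _ = P (pathEvent R w) * ∏ i ∈ Finset.Ioi j, blockWeight p (w' i) := by
        rw [hRIndep.measure_iInter_preimage_comp_eq_prod hg (fun _ => .of_discrete),
          Fintype.prod_sum_type, pathEvent, hRIndep.measure_iInter_preimage_comp_eq_prod
          (site_injective w) (fun _ => .of_discrete), ← Finset.prod_coe_sort (Finset.Ioi j)]
        exact congrArg _ (Finset.prod_congr rfl fun t _ =>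
          measure_preimage_radii_some hRMeas hRDist hp0 hp1 w' t)
  · have hsite : site w (some j) = site w' (some j) :=
      congrArg coneVertex (pathWord_congr (fun i hi => hagree i hi) le_rfl)
    have hempty : pathEvent R w ∩ pathEvent R w' = ∅ := by
      refine eq_empty_of_forall_notMem fun ω ⟨h, h'⟩ => hlen ?_
      have h1 : min (R (site w (some j)) ω) K = (w j).len := mem_iInter.mp h (some j)
      have h2 : min (R (site w' (some j)) ω) K = (w' j).len := mem_iInter.mp h' (some j)
      rw [← h1, ← h2, hsite]
    simp [hempty]

end ConePercolation

open ConePercolation in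
theorem conePercolation_geometric_survives_general
    (d : ℕ) (p : ℝ) (hp0 : 0 < p) (hp1 : p < 1)
    (Ω : Type*) [MeasurableSpace Ω] (P : Measure Ω) [IsProbabilityMeasure P]
    (R : TdVertex d → Ω → ℕ) (hRMeas : ∀ u, Measurable (R u))
    (hRIndep : iIndepFun R P)
    (hRDist : ∀ u k, P {ω | R u ω = k} = ENNReal.ofReal ((1 - p) * p ^ k))
    (hcrit : (d : ℝ) * p ^ 2 - 2 * (d : ℝ) * p + 1 < 0) :
    0 < P (survival distFull (none : TdVertex d) R) := by
  obtain ⟨N, hN⟩ := exists_one_lt_sum_range_mul_pow (sub_pos.mpr hp1)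
    (by positivity : (0 : ℝ) ≤ d * p) (by nlinarith)
  set m := ∑ b : Block d (N + 1), blockWeight p b
  have hm : 1 < m := (ENNReal.one_lt_ofReal.mpr hN).trans_le
    (ofReal_sum_le_sum_blockWeight hp0.le hp1 N)
  have hm' : m ≠ ∞ := ENNReal.sum_ne_top.mpr fun _ _ => ENNReal.ofReal_ne_top
  set C := 1 + (Fintype.card (Block d (N + 1)) : ℝ≥0∞) / (m - 1)
  have hC : C ≠ ∞ := ENNReal.add_ne_top.mpr ⟨ENNReal.one_ne_top,
    ENNReal.div_ne_top (ENNReal.natCast_ne_top _) (tsub_pos_of_lt hm).ne'⟩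
  have hbound : ∀ n, ENNReal.ofReal p / C ≤ P (⋃ w : Fin n → Block d (N + 1), pathEvent R w) :=
    fun n => ENNReal.div_le_of_le_mul' <| le_mul_measure_iUnion_of_branching P _
      (measurableSet_pathEvent hRMeas) _ _ (measure_pathEvent hRIndep hRMeas hRDist hp0.le hp1)
      (fun _ _ _ => measure_pathEvent_inter_le hRIndep hRMeas hRDist hp0.le hp1) hm hm'
  calc 0 < ENNReal.ofReal p / C := ENNReal.div_pos (ENNReal.ofReal_pos.mpr hp0).ne' hC
    _ ≤ P (limsup (fun n => ⋃ w : Fin n → Block d (N + 1), pathEvent R w) atTop) :=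
      le_measure_limsup_atTop (fun n => .iUnion fun w => measurableSet_pathEvent hRMeas w) hbound
    _ ≤ P (survival distFull none R) := measure_mono limsup_iUnion_pathEvent_subset_survival

/-- Cone percolation on `T_d` with geometric radius of influence,
`P[R = k] = (1 - p) p^k` for `k = 0, 1, 2, …`, `0 < p < 1`.
If `d p² - 2 d p + 1 < 0` then `P[V] > 0`. -/
theorem conePercolation_geometric_survives
    (d : ℕ) (hd : 2 ≤ d) (p : ℝ) (hp0 : 0 < p) (hp1 : p < 1)
    (Ω : Type*) [MeasurableSpace Ω] (P : Measure Ω) [IsProbabilityMeasure P]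
    (R : TdVertex d → Ω → ℕ) (hRMeas : ∀ u, Measurable (R u))
    (hRIndep : iIndepFun R P)
    (hRDist : ∀ u k, P {ω | R u ω = k} = ENNReal.ofReal ((1 - p) * p ^ k))
    (hcrit : (d : ℝ) * p ^ 2 - 2 * (d : ℝ) * p + 1 < 0) :
    0 < P (survival distFull (none : TdVertex d) R) :=
  conePercolation_geometric_survives_general d p hp0 hp1 Ω P R hRMeas hRIndep hRDist hcrit
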